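/- Let m ≥ 1, let z ∈ ℂ with Im z > 0, and let L₁,…,L_m and L̂₁,…,L̂_m be symmetric positive definite real K×K matrices, regarded as complex matrices. Define D_m = L_m − z·L̂_m⁻¹ and, for k = m−1,…,1, D_k = (L_k⁻¹ + D_{k+1}⁻¹)⁻¹ − z·L̂_k⁻¹. Then for every k the Hermitian matrix i·(D_k − D_kᴴ) is positive definite (so D_k, and each intermediate matrix L_k⁻¹ + D_{k+1}⁻¹, is invertible), and the S-fraction value D₁⁻¹ satisfies: i·((D₁⁻¹)ᴴ − D₁⁻¹) is positive definite, i.e., the imaginary part of D₁⁻¹ is positive definite. -/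

import Mathlib

/-!
With `Im M = (M - Mᴴ)/(2i)`: adding a Hermitian matrix does not change `Im M`,
`Im (z • B) = (Im z) • B` for Hermitian `B`, and `Im (M⁻¹) = -(M⁻¹)ᴴ (Im M) M⁻¹`, so inversion turns
a positive definite imaginary part into a negative definite one; a matrix with definite imaginary
part is invertible.
Downward induction along the recursion then shows that every `Im D_k` is negative definite, hence
`Im D₁⁻¹` is positive definite.
-/

open Matrix
open scoped ComplexOrder

namespace Matrix

variable {n : Type*} {M N H : Matrix n n ℂ}

def ImPosDef (M : Matrix n n ℂ) : Prop := (Complex.I • (Mᴴ - M)).PosDef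

lemma imPosDef_neg_iff : (-M).ImPosDef ↔ (Complex.I • (M - Mᴴ)).PosDef := by
  rw [ImPosDef, conjTranspose_neg, neg_sub_neg]

lemma ImPosDef.add (hM : M.ImPosDef) (hN : N.ImPosDef) : (M + N).ImPosDef := by
  rw [ImPosDef, conjTranspose_add, add_sub_add_comm, smul_add]
  exact PosDef.add hM hN

lemma ImPosDef.add_isHermitian (hM : M.ImPosDef) (hH : H.IsHermitian) : (M + H).ImPosDef := by
  rwa [ImPosDef, conjTranspose_add, hH.eq, add_sub_add_right_eq_sub]

lemma imPosDef_smul {z : ℂ} (hz : 0 < z.im) (hN : N.PosDef) : (z • N).ImPosDef := by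
  have h : Complex.I • ((z • N)ᴴ - z • N) = ((2 * z.im : ℝ) : ℂ) • N := by
    rw [conjTranspose_smul, hN.isHermitian.eq, ← sub_smul, smul_smul, Complex.star_def,
      ← neg_sub, Complex.sub_conj]
    congr 1
    ring_nf
    simp [Complex.I_sq]
  rw [ImPosDef, h]
  exact hN.smul (by positivity)

variable [Fintype n] [DecidableEq n]

lemma ImPosDef.isUnit (hM : M.ImPosDef) : IsUnit M := by
  rw [isUnit_iff_isUnit_det, isUnit_iff_ne_zero]
  intro hdet
  obtain ⟨v, hv, hMv⟩ := exists_mulVec_eq_zero_iff.mpr hdet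
  have hMHv : star v ⬝ᵥ (Mᴴ *ᵥ v) = 0 := by
    rw [dotProduct_mulVec, ← star_mulVec, hMv, star_zero, zero_dotProduct]
  have := hM.dotProduct_mulVec_pos hv
  rw [smul_mulVec, sub_mulVec, dotProduct_smul, dotProduct_sub, hMHv, hMv, dotProduct_zero,
    sub_zero, smul_zero] at this
  exact this.ne rfl

lemma ImPosDef.neg_inv (hM : M.ImPosDef) : (-M⁻¹).ImPosDef := by
  have hdet : IsUnit M.det := (isUnit_iff_isUnit_det M).mp hM.isUnit
  have hdetH : IsUnit Mᴴ.det := by rwa [det_conjTranspose, isUnit_star]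
  have hconj : star M⁻¹ * (Complex.I • (Mᴴ - M)) * M⁻¹ = Complex.I • ((-M⁻¹)ᴴ - -M⁻¹) := by
    rw [star_eq_conjTranspose, conjTranspose_nonsing_inv, Matrix.mul_smul, Matrix.smul_mul,
      mul_sub, sub_mul, nonsing_inv_mul Mᴴ hdetH, one_mul, mul_assoc, mul_nonsing_inv M hdet,
      mul_one, conjTranspose_neg, neg_sub_neg, conjTranspose_nonsing_inv]
  rw [ImPosDef, ← hconj]
  exact (IsUnit.posDef_star_left_conjugate_iff (isUnit_nonsing_inv_iff.mpr hM.isUnit)).mpr hM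

lemma ImPosDef.inv_of_neg (hM : (-M).ImPosDef) : M⁻¹.ImPosDef := by
  have hdet : IsUnit M.det := by
    rw [← isUnit_iff_isUnit_det, ← IsUnit.neg_iff]
    exact hM.isUnit
  have hinv : (-M)⁻¹ = -M⁻¹ := inv_eq_left_inv (by simp [nonsing_inv_mul _ hdet])
  simpa [hinv] using hM.neg_inv

open scoped MatrixOrder in
lemma PosDef.map_ofReal {A : Matrix n n ℝ} (hA : A.PosDef) : (A.map Complex.ofReal).PosDef := by
  set S := CFC.sqrt A
  have hS : Sᴴ = S := (CFC.sqrt_nonneg A).posSemidef.isHermitian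
  have hSS : S * S = A := CFC.sqrt_mul_sqrt_self A hA.posSemidef.nonneg
  have hmap : A.map Complex.ofReal = (S.map Complex.ofReal)ᴴ * S.map Complex.ofReal := by
    rw [← conjTranspose_map _ fun r => (Complex.conj_ofReal r).symm, hS, ← hSS]
    exact Matrix.map_mul (f := Complex.ofRealHom)
  refine (PosSemidef.posDef_iff_isUnit ?_).mpr (hA.isUnit.map Complex.ofRealHom.mapMatrix)
  rw [hmap]
  exact posSemidef_conjTranspose_mul_self _

end Matrix

theorem stmt13 {K : ℕ} (m : ℕ) (hm : 1 ≤ m) (z : ℂ) (hz : 0 < z.im)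
    (L Lhat : ℕ → Matrix (Fin K) (Fin K) ℝ)
    (hL : ∀ k, 1 ≤ k → k ≤ m → (L k).PosDef)
    (hLhat : ∀ k, 1 ≤ k → k ≤ m → (Lhat k).PosDef)
    (D : ℕ → Matrix (Fin K) (Fin K) ℂ)
    (hDm : D m = (L m).map Complex.ofReal - z • ((Lhat m).map Complex.ofReal)⁻¹)
    (hDk : ∀ k, 1 ≤ k → k < m →
      D k = (((L k).map Complex.ofReal)⁻¹ + (D (k + 1))⁻¹)⁻¹ -
        z • ((Lhat k).map Complex.ofReal)⁻¹) :
    (∀ k, 1 ≤ k → k ≤ m →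
      (Complex.I • (D k - (D k)ᴴ)).PosDef ∧ IsUnit (D k)) ∧
    (∀ k, 1 ≤ k → k < m →
      IsUnit (((L k).map Complex.ofReal)⁻¹ + (D (k + 1))⁻¹)) ∧
    (Complex.I • (((D 1)⁻¹)ᴴ - (D 1)⁻¹)).PosDef := by
  have hLinv : ∀ k, 1 ≤ k → k ≤ m → (((L k).map Complex.ofReal)⁻¹).IsHermitian :=
    fun k hk hkm => (hL k hk hkm).map_ofReal.inv.isHermitian
  have hzLhat : ∀ k, 1 ≤ k → k ≤ m → (z • ((Lhat k).map Complex.ofReal)⁻¹).ImPosDef :=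
    fun k hk hkm => imPosDef_smul hz (hLhat k hk hkm).map_ofReal.inv
  have hstep k (hk : 1 ≤ k) (hkm : k < m) (hD : (-D (k + 1)).ImPosDef) :
      (((L k).map Complex.ofReal)⁻¹ + (D (k + 1))⁻¹).ImPosDef := by
    rw [add_comm]
    exact hD.inv_of_neg.add_isHermitian (hLinv k hk hkm.le)
  have hneg : ∀ k, 1 ≤ k → k ≤ m → (-D k).ImPosDef := by
    intro k hk hkm
    induction hkm using Nat.decreasingInduction with
    | self =>
      rw [hDm, neg_sub, sub_eq_add_neg]
      exact (hzLhat m hm le_rfl).add_isHermitian (hL m hm le_rfl).map_ofReal.isHermitian.neg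
    | of_succ k hkm ih =>
      rw [hDk k hk hkm, neg_sub, sub_eq_add_neg]
      exact (hzLhat k hk hkm.le).add (hstep k hk hkm (ih (by omega))).neg_inv
  refine ⟨fun k hk hkm => ⟨imPosDef_neg_iff.mp (hneg k hk hkm), ?_⟩,
    fun k hk hkm => (hstep k hk hkm (hneg (k + 1) (by omega) hkm)).isUnit, ?_⟩
  · exact (IsUnit.neg_iff _).mp (hneg k hk hkm).isUnit
  · exact (hneg 1 le_rfl hm).inv_of_neg
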